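/- Suppose the loss L depends on states at times t1 < ... < tN and a : [t0,tN] → ℝ^{1×N} is defined piecewise: on (t_{i-1}, t_i], a solves ȧ = -a J(t), with jump condition a(t_i) = a(t_i⁺) - ∂L/∂z(t_i), starting from a(tN⁺) = 0 and jumping at each t_i going backward. Then the total derivative of L along the perturbation equals ∑_{i=1}^N (∂L/∂z(t_i))·η(t_i) = -∫_{t0}^{tN} a(t) B(t) ζ(t) dt, where η solves η̇ = J η + B ζ, η(t0) = 0. -/

import Mathlib

open Matrix

/-- multi-label adjoint formula with jump discontinuities.
The piecewise adjoint `a` (represented by its branches `A i` on `[t_{i-1}, t_i]`)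
solves `ȧ = -a J` on each interval, starts from `a(t_N⁺) = 0` and jumps by
`-∂L/∂z(t_i)` (the row vector `ℓ i`) backward at each label time `t_i`. Then
`∑_{i=1}^N (∂L/∂z(t_i))·η(t_i) = -∫_{t0}^{tN} a B ζ` (written as the sum of the
interval integrals of the piecewise `a`), where `η̇ = J η + B ζ`, `η(t0) = 0`. -/
theorem stmt_13 {N P : ℕ} (Nlab : ℕ) (hNlab : 1 ≤ Nlab)
    (t : ℕ → ℝ) (hmono : ∀ i < Nlab, t i < t (i + 1))
    (J : ℝ → Matrix (Fin N) (Fin N) ℝ) (B : ℝ → Matrix (Fin N) (Fin P) ℝ)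
    (ζ : ℝ → (Fin P → ℝ))
    (hJ : ContinuousOn J (Set.Icc (t 0) (t Nlab)))
    (hB : ContinuousOn B (Set.Icc (t 0) (t Nlab)))
    (hζ : ContinuousOn ζ (Set.Icc (t 0) (t Nlab)))
    (ℓ : ℕ → (Fin N → ℝ))  -- ℓ i = ∂L/∂z(t_i), a row vector
    (A : ℕ → ℝ → (Fin N → ℝ))  -- A i = branch of the adjoint a on [t_{i-1}, t_i]
    (hAode : ∀ i ∈ Finset.Icc 1 Nlab, ∀ s ∈ Set.Icc (t (i - 1)) (t i),
      HasDerivAt (A i) (-(A i s ᵥ* J s)) s)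
    (hAjumpN : A Nlab (t Nlab) = 0 - ℓ Nlab)
    (hAjump : ∀ i, 1 ≤ i → i < Nlab → A i (t i) = A (i + 1) (t i) - ℓ i)
    (η : ℝ → (Fin N → ℝ))
    (hη : ∀ s ∈ Set.Icc (t 0) (t Nlab), HasDerivAt η (J s *ᵥ η s + B s *ᵥ ζ s) s)
    (hη0 : η (t 0) = 0) :
    (∑ i ∈ Finset.Icc 1 Nlab, ∑ j, ℓ i j * η (t i) j)
      = -∑ i ∈ Finset.Icc 1 Nlab,
          ∫ s in (t (i - 1))..(t i), ∑ p, (A i s ᵥ* B s) p * ζ s p := by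
  -- monotonicity of `t` on `[0, Nlab]`
  have hle : ∀ i j : ℕ, i ≤ j → j ≤ Nlab → t i ≤ t j := by
    intro i j hij hj
    induction j with
    | zero => simp_all
    | succ k ih =>
      rcases Nat.lt_succ_iff_lt_or_eq.mp (Nat.lt_succ_of_le hij) with h | h
      · exact le_trans (ih (Nat.lt_succ_iff.mp h) (le_trans (Nat.le_succ k) hj))
          (le_of_lt (hmono k (Nat.lt_of_lt_of_le (Nat.lt_succ_self k) hj)))
      · exact h ▸ le_rfl
  -- the pairing function
  set F : ℕ → ℝ → ℝ := fun i x => A i x ⬝ᵥ η x with hFdef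
  -- each integral is `F i (t i) - F i (t (i-1))`
  have hkey : ∀ i ∈ Finset.Icc 1 Nlab,
      (∫ s in (t (i - 1))..(t i), ∑ p, (A i s ᵥ* B s) p * ζ s p)
        = F i (t i) - F i (t (i - 1)) := by
    intro i hi
    rw [Finset.mem_Icc] at hi
    obtain ⟨hi1, hiN⟩ := hi
    have hsub : Set.Icc (t (i - 1)) (t i) ⊆ Set.Icc (t 0) (t Nlab) := by
      apply Set.Icc_subset_Icc
      · exact hle 0 (i - 1) (Nat.zero_le _) (le_trans (Nat.sub_le i 1) hiN)
      · exact hle i Nlab hiN le_rfl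
    have htle : t (i - 1) ≤ t i := by
      have := hle (i - 1) i (Nat.sub_le i 1) hiN
      exact this
    have huIcc : Set.uIcc (t (i - 1)) (t i) = Set.Icc (t (i - 1)) (t i) :=
      Set.uIcc_of_le htle
    have hAcont : ContinuousOn (A i) (Set.Icc (t (i - 1)) (t i)) := fun s hs =>
      (hAode i (Finset.mem_Icc.mpr ⟨hi1, hiN⟩) s hs).continuousAt.continuousWithinAt
    have hderiv : ∀ s ∈ Set.uIcc (t (i - 1)) (t i),
        HasDerivAt (F i) (∑ p, (A i s ᵥ* B s) p * ζ s p) s := by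
      intro s hs
      rw [huIcc] at hs
      have hA := hAode i (Finset.mem_Icc.mpr ⟨hi1, hiN⟩) s hs
      have hηs := hη s (hsub hs)
      have hAj : ∀ j, HasDerivAt (fun x => A i x j) ((-(A i s ᵥ* J s)) j) s :=
        hasDerivAt_pi.mp hA
      have hηj : ∀ j, HasDerivAt (fun x => η x j) ((J s *ᵥ η s + B s *ᵥ ζ s) j) s :=
        hasDerivAt_pi.mp hηs
      have hmul : HasDerivAt (F i)
          (∑ j, ((-(A i s ᵥ* J s)) j * η s j
            + A i s j * (J s *ᵥ η s + B s *ᵥ ζ s) j)) s := by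
        have : HasDerivAt (fun x => ∑ j, A i x j * η x j)
            (∑ j, ((-(A i s ᵥ* J s)) j * η s j
              + A i s j * (J s *ᵥ η s + B s *ᵥ ζ s) j)) s :=
          HasDerivAt.fun_sum (fun j _ => (hAj j).mul (hηj j))
        exact this
      convert hmul using 1
      have h1 : ∑ j, ((-(A i s ᵥ* J s)) j * η s j
            + A i s j * (J s *ᵥ η s + B s *ᵥ ζ s) j)
          = (-(A i s ᵥ* J s)) ⬝ᵥ η s + A i s ⬝ᵥ (J s *ᵥ η s + B s *ᵥ ζ s) := by
        rw [Finset.sum_add_distrib]; rfl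
      have h2 : (∑ p, (A i s ᵥ* B s) p * ζ s p) = (A i s ᵥ* B s) ⬝ᵥ ζ s := rfl
      rw [h1, h2, neg_dotProduct, dotProduct_add,
        Matrix.dotProduct_mulVec, Matrix.dotProduct_mulVec]
      ring
    have hint : IntervalIntegrable (fun s => ∑ p, (A i s ᵥ* B s) p * ζ s p)
        MeasureTheory.volume (t (i - 1)) (t i) := by
      apply ContinuousOn.intervalIntegrable
      rw [huIcc]
      apply continuousOn_finset_sum
      intro p _
      simp only [Matrix.vecMul, dotProduct]
      apply ContinuousOn.mul
      · apply continuousOn_finset_sum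
        intro k _
        exact ((continuous_apply k).comp_continuousOn hAcont).mul
          ((continuous_apply p).comp_continuousOn
            ((continuous_apply k).comp_continuousOn (hB.mono hsub)))
      · exact (continuous_apply p).comp_continuousOn (hζ.mono hsub)
    exact intervalIntegral.integral_eq_sub_of_hasDerivAt hderiv hint
  rw [Finset.sum_congr rfl hkey]
  -- telescoping with jumps
  set G : ℕ → ℝ := fun i => if i = Nlab then 0 else F (i + 1) (t i) with hGdef
  have hstep : ∀ i ∈ Finset.Icc 1 Nlab,
      F i (t i) - F i (t (i - 1))
        = (G i - G (i - 1)) - ∑ j, ℓ i j * η (t i) j := by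
    intro i hi
    rw [Finset.mem_Icc] at hi
    obtain ⟨hi1, hiN⟩ := hi
    have hGpred : G (i - 1) = F i (t (i - 1)) := by
      have h1 : i - 1 ≠ Nlab := by omega
      have h2 : i - 1 + 1 = i := by omega
      simp [hGdef, h1, h2]
    have hdot : ∀ v : Fin N → ℝ, v ⬝ᵥ η (t i) = ∑ j, v j * η (t i) j :=
      fun v => rfl
    rcases eq_or_lt_of_le hiN with heq | hlt
    · subst heq
      have hGi : G i = 0 := by simp [hGdef]
      have : F i (t i) = -∑ j, ℓ i j * η (t i) j := by
        simp only [hFdef, hAjumpN, sub_dotProduct, zero_dotProduct]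
        simp [dotProduct]
      rw [this, hGi, hGpred]; ring
    · have hGi : G i = F (i + 1) (t i) := by
        have : i ≠ Nlab := Nat.ne_of_lt hlt
        simp [hGdef, this]
      have : F i (t i) = F (i + 1) (t i) - ∑ j, ℓ i j * η (t i) j := by
        simp only [hFdef, hAjump i hi1 hlt, sub_dotProduct]
        simp [dotProduct]
      rw [this, hGi, hGpred]; ring
  rw [Finset.sum_congr rfl hstep, Finset.sum_sub_distrib]
  have htel : ∑ i ∈ Finset.Icc 1 Nlab, (G i - G (i - 1)) = G Nlab - G 0 := by
    have h1 : Finset.Icc 1 Nlab = Finset.Ico 1 (Nlab + 1) := by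
      rw [Finset.Ico_add_one_right_eq_Icc]
    rw [h1, Finset.sum_Ico_eq_sum_range]
    simp only [Nat.add_sub_cancel]
    have : ∀ k, G (1 + k) - G (1 + k - 1) = G (k + 1) - G k := by
      intro k; congr 1 <;> congr 1 <;> omega
    rw [Finset.sum_congr rfl fun k _ => this k]
    exact Finset.sum_range_sub G Nlab
  have hG0 : G 0 = 0 := by
    have h0 : (0 : ℕ) ≠ Nlab := by omega
    simp [hGdef, h0, hFdef, hη0, dotProduct_zero]
  have hGN : G Nlab = 0 := by simp [hGdef]
  rw [htel, hG0, hGN]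
  ring
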